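/- There exist nondeterministic automata S and P over a common event set with S ⊆ P such that S is language controllable and FM-controllable w.r.t. P, but q0_S is not nondeterministically partially bisimilar to q0_P. (Concretely: Σ_u = {u}; P has p1 →^u p2, p1 →^u p3, p2 →^c p4; S is the subautomaton with states {p1,p2,p4} and transitions p1 →^u p2, p2 →^c p4.) -/
import Mathlib


namespace SCT

inductive Path {Q E : Type} (tr : Q → E → Q → Prop) : Q → List E → Q → Prop
  | nil (q : Q) : Path tr q [] q
  | cons {q q' q'' : Q} {a : E} {w : List E} :
      tr q a q' → Path tr q' w q'' → Path tr q (a :: w) q''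

def CanDo {Q E : Type} (tr : Q → E → Q → Prop) (q : Q) (w : List E) : Prop :=
  ∃ q', Path tr q w q'

def Lang {Q E : Type} (tr : Q → E → Q → Prop) (q0 : Q) : Set (List E) :=
  { w | CanDo tr q0 w }

/-- Language controllability of `K` w.r.t. `M`: `K·Σu ∩ M ⊆ K`. -/
def LangControllable {E : Type} (U : Set E) (K M : Set (List E)) : Prop :=
  ∀ w u, w ∈ K → u ∈ U → w ++ [u] ∈ M → w ++ [u] ∈ K

/-- Synchronous product transition relation. -/
def prodTr {Q1 Q2 E : Type} (t1 : Q1 → E → Q1 → Prop) (t2 : Q2 → E → Q2 → Prop) :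
    Q1 × Q2 → E → Q1 × Q2 → Prop :=
  fun p a p' => t1 p.1 a p'.1 ∧ t2 p.2 a p'.2

def Deterministic {Q E : Type} (tr : Q → E → Q → Prop) : Prop :=
  ∀ q a q' q'', tr q a q' → tr q a q'' → q' = q''

/-- Automata controllability of S w.r.t. P. -/
def AC {QS QP E : Type} (U : Set E) (tS : QS → E → QS → Prop) (s0 : QS)
    (tP : QP → E → QP → Prop) (p0 : QP) : Prop :=
  ∀ w u, u ∈ U → CanDo tP p0 (w ++ [u]) → CanDo tS s0 w → CanDo tS s0 (w ++ [u])

/-- FM-controllability of S w.r.t. P. -/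
def FM {QS QP E : Type} (U : Set E) (tS : QS → E → QS → Prop) (s0 : QS)
    (tP : QP → E → QP → Prop) (p0 : QP) : Prop :=
  ∀ w u q, u ∈ U → CanDo tP p0 (w ++ [u]) → Path tS s0 w q → ∃ q', tS q u q'

def Reach {Q E : Type} (tr : Q → E → Q → Prop) (q0 q : Q) : Prop :=
  ∃ w, Path tr q0 w q

/-- Σu-admissibility of S w.r.t. P (Kushi–Takai). -/
def KT {QS QP E : Type} (U : Set E) (tS : QS → E → QS → Prop) (s0 : QS)
    (tP : QP → E → QP → Prop) (p0 : QP) : Prop :=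
  ∀ qS qP u, Reach (prodTr tS tP) (s0, p0) (qS, qP) → u ∈ U →
    (∃ qP', tP qP u qP') → ∃ q', prodTr tS tP (qS, qP) u q'

/-- Control relation (for deterministic automata). -/
def ControlRel {QS QP E : Type} (U : Set E) (tS : QS → E → QS → Prop)
    (tP : QP → E → QP → Prop) (R : QS → QP → Prop) : Prop :=
  ∀ qS qP, R qS qP →
    (∀ a qS' qP', tS qS a qS' → tP qP a qP' → R qS' qP') ∧
    (∀ u, u ∈ U → (∃ qP', tP qP u qP') →
      (∃ qS', tS qS u qS') ∧ ∀ qS' qP', tS qS u qS' → tP qP u qP' → R qS' qP')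

/-- Partial bisimulation (deterministic version). -/
def PB {QS QP E : Type} (U : Set E) (tS : QS → E → QS → Prop)
    (tP : QP → E → QP → Prop) (R : QS → QP → Prop) : Prop :=
  ∀ qS qP, R qS qP →
    (∀ a, (∃ qS', tS qS a qS') →
      (∃ qP', tP qP a qP') ∧ ∀ qS' qP', tS qS a qS' → tP qP a qP' → R qS' qP') ∧
    (∀ u, u ∈ U → (∃ qP', tP qP u qP') →
      (∃ qS', tS qS u qS') ∧ ∀ qS' qP', tS qS u qS' → tP qP u qP' → R qS' qP')

/-- Nondeterministic partial bisimulation. -/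
def NPB {QS QP E : Type} (U : Set E) (tS : QS → E → QS → Prop)
    (tP : QP → E → QP → Prop) (R : QS → QP → Prop) : Prop :=
  ∀ qS qP, R qS qP →
    (∀ a qS', tS qS a qS' → ∃ qP', tP qP a qP' ∧ R qS' qP') ∧
    (∀ u qP', u ∈ U → tP qP u qP' → ∃ qS', tS qS u qS' ∧ R qS' qP')

/-- State controllability (via an embedding `f`); `Σc = Uᶜ`. -/
def SC {QS QP E : Type} (U : Set E) (tS : QS → E → QS → Prop) (s0 : QS)
    (tP : QP → E → QP → Prop) (p0 : QP) : Prop :=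
  ∃ f : QS → QP, f s0 = p0 ∧
    (∀ q q' a, tS q a q' → tP (f q) a (f q')) ∧
    (∀ q a, ¬ (∃ q', tS q a q') → (∃ p', tP (f q) a p') → a ∉ U)

/-- S is a subautomaton of P (both modelled over the same state type). -/
def Sub {Q E : Type} (tS tP : Q → E → Q → Prop) (s0 p0 : Q) : Prop :=
  (∀ q a q', tS q a q' → tP q a q') ∧ s0 = p0

/-- FM⊆-controllability of a subautomaton S w.r.t. P. -/
def FMsub {Q E : Type} (U : Set E) (tS : Q → E → Q → Prop) (s0 : Q)
    (tP : Q → E → Q → Prop) (p0 : Q) : Prop :=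
  ∀ w u q q', u ∈ U → Path tP p0 w q → tP q u q' → Path tS s0 w q → tS q u q'

/-- Nondeterministic state controllability (Zhou et al.). -/
def SCn {QS QP E : Type} (U : Set E) (tS : QS → E → QS → Prop) (s0 : QS)
    (tP : QP → E → QP → Prop) (p0 : QP) : Prop :=
  ∀ w u, w ∈ Lang tS s0 → u ∈ U → w ++ [u] ∈ Lang tP p0 →
    ∀ q, Path tS s0 w q → ∃ q', tS q u q'

inductive St : Type | s0 | s1 | s2 | s3
deriving DecidableEq

def exS : St → Bool → St → Prop :=
  fun q a q' => (q = .s0 ∧ a = true ∧ q' = .s1) ∨ (q = .s1 ∧ a = false ∧ q' = .s3)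

def exP : St → Bool → St → Prop :=
  fun q a q' => (q = .s0 ∧ a = true ∧ (q' = .s1 ∨ q' = .s2)) ∨
    (q = .s1 ∧ a = false ∧ q' = .s3)

lemma pathP_char {w : List Bool} {q : St} (h : Path exP .s0 w q) :
    (w = [] ∧ q = .s0) ∨ (w = [true] ∧ (q = .s1 ∨ q = .s2)) ∨ (w = [true, false] ∧ q = .s3) := by
  cases h with
  | nil => exact Or.inl ⟨rfl, rfl⟩
  | cons h1 h2 =>
    rcases h1 with ⟨_, rfl, h1⟩ | ⟨h0, _, _⟩
    · rcases h1 with rfl | rfl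
      · cases h2 with
        | nil => exact Or.inr (Or.inl ⟨rfl, Or.inl rfl⟩)
        | cons h3 h4 =>
          rcases h3 with ⟨h, _, _⟩ | ⟨_, rfl, rfl⟩
          · exact absurd h (by decide)
          · cases h4 with
            | nil => exact Or.inr (Or.inr ⟨rfl, rfl⟩)
            | cons h5 _ => rcases h5 with ⟨h, _, _⟩ | ⟨h, _, _⟩ <;> exact absurd h (by decide)
      · cases h2 with
        | nil => exact Or.inr (Or.inl ⟨rfl, Or.inr rfl⟩)
        | cons h3 _ => rcases h3 with ⟨h, _, _⟩ | ⟨h, _, _⟩ <;> exact absurd h (by decide)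
    · exact absurd h0 (by decide)

theorem stmt19 : ∃ (Q E : Type) (U : Set E) (tS tP : Q → E → Q → Prop) (s0 p0 : Q),
    Sub tS tP s0 p0 ∧
      LangControllable U (Lang tS s0) (Lang tP p0) ∧ FM U tS s0 tP p0 ∧
      ¬ ∃ R : Q → Q → Prop, NPB U tS tP R ∧ R s0 p0 := by
  refine ⟨St, Bool, {true}, exS, exP, .s0, .s0, ⟨?_, rfl⟩, ?_, ?_, ?_⟩
  · rintro q a q' (⟨rfl, rfl, rfl⟩ | ⟨rfl, rfl, rfl⟩)
    · exact Or.inl ⟨rfl, rfl, Or.inl rfl⟩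
    · exact Or.inr ⟨rfl, rfl, rfl⟩
  · -- LangControllable
    rintro w u ⟨q, hw⟩ hu ⟨q', hwu⟩
    rcases pathP_char hwu with ⟨h, _⟩ | ⟨h, _⟩ | ⟨h, rfl⟩
    · simp at h
    · have : w = [] := by cases w with
        | nil => rfl
        | cons a t => simp at h
      subst this
      simp only [Set.mem_singleton_iff] at hu; subst hu
      exact ⟨.s1, .cons (Or.inl ⟨rfl, rfl, rfl⟩) (.nil _)⟩
    · -- w ++ [u] = [true, false], but u ∈ {true}, so u = true, contradiction
      simp only [Set.mem_singleton_iff] at hu; subst hu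
      have hl := congrArg (fun l => l.getLast?) h
      simp at hl
  · -- FM
    rintro w u q hu ⟨q', hwu⟩ hw
    simp only [Set.mem_singleton_iff] at hu; subst hu
    rcases pathP_char hwu with ⟨h, _⟩ | ⟨h, _⟩ | ⟨h, _⟩
    · simp at h
    · have : w = [] := by cases w with
        | nil => rfl
        | cons a t => simp at h
      subst this
      cases hw; exact ⟨.s1, Or.inl ⟨rfl, rfl, rfl⟩⟩
    · have hl := congrArg (fun l => l.getLast?) h
      simp at hl
  · -- no NPB
    rintro ⟨R, hR, hR0⟩
    obtain ⟨-, h2⟩ := hR _ _ hR0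
    obtain ⟨qS', hS', hR12⟩ := h2 true .s2 rfl (Or.inl ⟨rfl, rfl, Or.inr rfl⟩)
    rcases hS' with ⟨_, _, rfl⟩ | ⟨h, _, _⟩
    · obtain ⟨h1, -⟩ := hR _ _ hR12
      obtain ⟨p', hp', -⟩ := h1 false .s3 (Or.inr ⟨rfl, rfl, rfl⟩)
      rcases hp' with ⟨h, _, _⟩ | ⟨h, _, _⟩ <;> exact absurd h (by decide)
    · exact absurd h (by decide)
end SCT
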